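/- For every C* > 0 there exist constants C > 0 and c > 0, depending only on C*, with the following property. Let κ = conv{x,y,z} and κ' = conv{x,y,w} be C*-regular triangles in ℝ³ sharing the edge [x,y]. Let ν = n̄(κ) and let ν' ∈ {n̄(κ'), −n̄(κ')} be chosen with ν + ν' ≠ 0; set n₀ = (ν + ν')/|ν + ν'| and d = max(diam(κ), diam(κ')). Let N, N' : ℝ³ → ℝ³ be affine maps, with tangentially projected linear parts D (with respect to κ) and D' (with respect to κ'). Assume: N((x+y)/2)·(y−x) = 0, N((y+z)/2)·(z−y) = 0, N'((x+y)/2)·(y−x) = 0, N'((y+w)/2)·(w−y) = 0, N((x+y)/2) = N'((x+y)/2), and N((x+y)/2)·n₀ = 1. If d·(‖D‖ + ‖D'‖) ≤ c, then |N((x+y)/2) − ν| ≤ C·d·(‖D‖ + ‖D'‖). (This is the paper's comparison lemma for pseudo-unit edge directors.) -/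

import Mathlib

open scoped RealInnerProductSpace

noncomputable section

/-- Euclidean 3-space. -/
abbrev E3 := EuclideanSpace ℝ (Fin 3)

/-- The cross product on `ℝ³`. -/
def cross3 (u v : E3) : E3 :=
  (WithLp.equiv 2 (Fin 3 → ℝ)).symm
    ![u 1 * v 2 - u 2 * v 1, u 2 * v 0 - u 0 * v 2, u 0 * v 1 - u 1 * v 0]

/-- The diameter of the triangle `conv{x,y,z}`. -/
def diam3 (x y z : E3) : ℝ := max ‖y - x‖ (max ‖z - x‖ ‖z - y‖)

/-- The area of the triangle `conv{x,y,z}`. -/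
def area3 (x y z : E3) : ℝ := ‖cross3 (y - x) (z - x)‖ / 2

/-- The unit normal `n̄(κ)` of the triangle `κ = conv{x,y,z}`. -/
def unitNormal (x y z : E3) : E3 :=
  ‖cross3 (y - x) (z - x)‖⁻¹ • cross3 (y - x) (z - x)

/-- The orthogonal projection of `ℝ³` onto the tangent plane `span{y−x, z−x}`
of the triangle `conv{x,y,z}`, as a map `ℝ³ → ℝ³`. -/
def tangentProj (x y z : E3) : E3 →L[ℝ] E3 :=
  (Submodule.span ℝ {y - x, z - x}).subtypeL ∘L
    Submodule.orthogonalProjection (Submodule.span ℝ {y - x, z - x})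

/-- The tangentially projected linear part `D = L∘P` of an affine map `N` with
linear part `L`, relative to the triangle `conv{x,y,z}`. -/
def tangGrad (N : E3 →ᵃ[ℝ] E3) (x y z : E3) : E3 →L[ℝ] E3 :=
  (LinearMap.toContinuousLinearMap N.linear) ∘L tangentProj x y z

/-!
Write `n = N((x+y)/2)` and `d` for the diameter. On `conv{x,y,z}` we have `⟪n, y - x⟫ = 0`
exactly, and comparing with `N((y+z)/2) = n + D((z-x)/2)` gives `⟪n, z - x⟫ = O(d²‖D‖)`;
since regularity keeps `|(y-x) × (z-x)| ≳ d²`, the distance of `n` to the normal line `ℝν`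
is `δ = O(d‖D‖)`. Likewise `n` is within `δ' = O(d‖D'‖)` of the line `ℝν'`. The normalisation
`⟪n, n₀⟫ = 1` along the bisector `n₀` then forces both `⟪n, ν⟫` and `⟪n, ν'⟫` to be close to `1`,
hence `ν'` close to `ν`, and finally `‖n - ν‖ ≤ 2(δ + δ')`.
-/

section UnitVectors

variable {V : Type*} [NormedAddCommGroup V] [InnerProductSpace ℝ V]

lemma norm_add_sq_eq_two_mul_inner_add {ν ν' : V} (hν : ‖ν‖ = 1) (hν' : ‖ν'‖ = 1) :
    ‖ν + ν'‖ ^ 2 = 2 * ⟪ν, ν + ν'⟫ := by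
  rw [norm_add_sq_real, inner_add_right, real_inner_self_eq_norm_sq, hν, hν']
  ring

lemma norm_sub_inner_smul_sq {e : V} (he : ‖e‖ = 1) (n : V) :
    ‖n - ⟪n, e⟫ • e‖ ^ 2 = ‖n‖ ^ 2 - ⟪n, e⟫ ^ 2 := by
  rw [norm_sub_sq_real, real_inner_smul_right, norm_smul, he, Real.norm_eq_abs, mul_one, sq_abs]
  ring

lemma norm_smul_sub_smul_sq {ν ν' : V} (hν : ‖ν‖ = 1) (hν' : ‖ν'‖ = 1) (a a' : ℝ) :
    ‖a • ν - a' • ν'‖ ^ 2 = (a - a') ^ 2 + 2 * (a * a') * (1 - ⟪ν, ν'⟫) := by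
  rw [norm_sub_sq_real, norm_smul, norm_smul, real_inner_smul_left, real_inner_smul_right,
    hν, hν', Real.norm_eq_abs, Real.norm_eq_abs, mul_one, mul_one, sq_abs, sq_abs]
  ring

lemma one_sub_le_inner_of_inner_add_eq_norm {ν ν' n : V} {δ : ℝ} (hν : ‖ν‖ = 1)
    (hν' : ‖ν'‖ = 1) (hne : ν + ν' ≠ 0) (hδ : δ < 1) (ht : ‖n - ⟪n, ν⟫ • ν‖ ≤ δ)
    (hn : ⟪n, ν + ν'⟫ = ‖ν + ν'‖) :
    1 - δ ≤ ⟪n, ν⟫ := by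
  set r := ‖ν + ν'‖
  have hr : 0 < r := norm_pos_iff.mpr hne
  have hr2 : r ≤ 2 := by
    calc r ≤ ‖ν‖ + ‖ν'‖ := norm_add_le _ _
      _ = 2 := by rw [hν, hν']; norm_num
  have hsq := norm_add_sq_eq_two_mul_inner_add hν hν'
  have hproj : ⟪n - ⟪n, ν⟫ • ν, ν + ν'⟫ = r - ⟪n, ν⟫ * (r ^ 2 / 2) := by
    rw [inner_sub_left, real_inner_smul_left, hn, hsq]
    ring
  have hbound : r - ⟪n, ν⟫ * (r ^ 2 / 2) ≤ δ * r := by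
    rw [← hproj]
    exact (real_inner_le_norm _ _).trans (mul_le_mul_of_nonneg_right ht (norm_nonneg _))
  have hlow : 1 - δ ≤ ⟪n, ν⟫ * (r / 2) := by nlinarith
  have hpos : 0 < ⟪n, ν⟫ := by nlinarith
  nlinarith

lemma abs_sub_one_le_of_add_eq {a a' r ε : ℝ} (hr : 0 < r) (hr2 : r ≤ 2)
    (hr4 : 4 - r ^ 2 ≤ 2 * ε ^ 2) (hsum : a + a' = r) (hdiff : |a - a'| ≤ ε)
    (hε1 : ε ≤ 1 / 2) :
    |a - 1| ≤ ε := by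
  have hr' : 2 - r ≤ ε ^ 2 := by nlinarith
  rw [abs_le] at hdiff ⊢
  constructor <;> nlinarith

lemma norm_sub_le_of_inner_normalize_add_eq_one {ν ν' n : V} {δ δ' : ℝ}
    (hν : ‖ν‖ = 1) (hν' : ‖ν'‖ = 1) (hne : ν + ν' ≠ 0)
    (ht : ‖n - ⟪n, ν⟫ • ν‖ ≤ δ) (ht' : ‖n - ⟪n, ν'⟫ • ν'‖ ≤ δ')
    (hn : ⟪n, ‖ν + ν'‖⁻¹ • (ν + ν')⟫ = 1) (hsmall : δ + δ' ≤ 1 / 2) :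
    ‖n - ν‖ ≤ 2 * (δ + δ') := by
  have hr : 0 < ‖ν + ν'‖ := norm_pos_iff.mpr hne
  have hn' : ⟪n, ν + ν'⟫ = ‖ν + ν'‖ := by
    rw [real_inner_smul_right, inv_mul_eq_one₀ hr.ne'] at hn
    exact hn.symm
  have hδ : 0 ≤ δ := (norm_nonneg _).trans ht
  have hδ' : 0 ≤ δ' := (norm_nonneg _).trans ht'
  set a := ⟪n, ν⟫
  set a' := ⟪n, ν'⟫
  have ha : 1 - δ ≤ a :=
    one_sub_le_inner_of_inner_add_eq_norm hν hν' hne (by linarith) ht hn'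
  have ha' : 1 - δ' ≤ a' := by
    rw [add_comm] at hne hn'
    exact one_sub_le_inner_of_inner_add_eq_norm hν' hν hne (by linarith) ht' hn'
  have hprod : 1 / 2 ≤ a * a' := by nlinarith
  have hdist : ‖a • ν - a' • ν'‖ ≤ δ + δ' := by
    calc ‖a • ν - a' • ν'‖ = ‖(n - a' • ν') - (n - a • ν)‖ := by congr 1; abel
      _ ≤ δ' + δ := norm_sub_le_of_le ht' ht
      _ = δ + δ' := add_comm _ _
  have hcos : ⟪ν, ν'⟫ ≤ 1 := (real_inner_le_norm _ _).trans (by rw [hν, hν', one_mul])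
  have hsq : (a - a') ^ 2 + 2 * (a * a') * (1 - ⟪ν, ν'⟫) ≤ (δ + δ') ^ 2 := by
    rw [← norm_smul_sub_smul_sq hν hν']
    exact pow_le_pow_left₀ (norm_nonneg _) hdist 2
  have hsum : a + a' = ‖ν + ν'‖ := by rw [← hn', inner_add_right]
  have hr2 : ‖ν + ν'‖ ≤ 2 := (norm_add_le _ _).trans (by rw [hν, hν']; norm_num)
  have hr4 : 4 - ‖ν + ν'‖ ^ 2 ≤ 2 * (δ + δ') ^ 2 := by
    rw [norm_add_sq_eq_two_mul_inner_add hν hν', inner_add_right, real_inner_self_eq_norm_sq, hν]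
    nlinarith [sq_nonneg (a - a')]
  have hdiff : |a - a'| ≤ δ + δ' :=
    abs_le_of_sq_le_sq' (by nlinarith) (by positivity) |> abs_le.mpr
  have ha1 := abs_sub_one_le_of_add_eq hr hr2 hr4 hsum hdiff hsmall
  calc ‖n - ν‖ = ‖(n - a • ν) + (a - 1) • ν‖ := by rw [sub_smul, one_smul]; congr 1; abel
    _ ≤ δ + |a - 1| := by
      refine (norm_add_le _ _).trans (add_le_add ht ?_)
      rw [norm_smul, hν, mul_one, Real.norm_eq_abs]
    _ ≤ 2 * (δ + δ') := by linarith

end UnitVectors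

lemma inner_E3_eq (a b : E3) : ⟪a, b⟫ = a 0 * b 0 + a 1 * b 1 + a 2 * b 2 := by
  simp [PiLp.inner_apply, Fin.sum_univ_three]
  ring

/-- Lagrange's identity for `n` and `u × v`, combined with `n × (u × v) = ⟪n,v⟫u - ⟪n,u⟫v`. -/
lemma norm_sq_mul_norm_cross3_sq_sub_inner_sq (n u v : E3) :
    ‖n‖ ^ 2 * ‖cross3 u v‖ ^ 2 - ⟪n, cross3 u v⟫ ^ 2 = ‖⟪n, v⟫ • u - ⟪n, u⟫ • v‖ ^ 2 := by
  simp only [← real_inner_self_eq_norm_sq, inner_E3_eq]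
  simp [cross3]
  ring

lemma norm_unitNormal {x y z : E3} (hw : cross3 (y - x) (z - x) ≠ 0) :
    ‖unitNormal x y z‖ = 1 :=
  norm_smul_inv_norm hw

lemma norm_sub_inner_unitNormal_smul_mul {x y z n : E3} (hw : cross3 (y - x) (z - x) ≠ 0)
    (hn : ⟪n, y - x⟫ = 0) :
    ‖n - ⟪n, unitNormal x y z⟫ • unitNormal x y z‖ * ‖cross3 (y - x) (z - x)‖ =
      |⟪n, z - x⟫| * ‖y - x‖ := by
  have hw' : ‖cross3 (y - x) (z - x)‖ ≠ 0 := norm_ne_zero_iff.mpr hw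
  refine (pow_left_inj₀ (by positivity) (by positivity) two_ne_zero).mp ?_
  have hid := norm_sq_mul_norm_cross3_sq_sub_inner_sq n (y - x) (z - x)
  rw [hn, zero_smul, sub_zero, norm_smul, Real.norm_eq_abs] at hid
  rw [mul_pow, norm_sub_inner_smul_sq (norm_unitNormal hw), unitNormal, real_inner_smul_right,
    mul_pow, ← hid]
  field_simp

lemma apply_midpoint_eq_add_tangGrad (N : E3 →ᵃ[ℝ] E3) (x y z : E3) :
    N (midpoint ℝ y z) = N (midpoint ℝ x y) + tangGrad N x y z ((2⁻¹ : ℝ) • (z - x)) := by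
  have hmem : (2⁻¹ : ℝ) • (z - x) ∈ Submodule.span ℝ ({y - x, z - x} : Set E3) :=
    Submodule.smul_mem _ _ (Submodule.subset_span (by simp))
  have hP : tangentProj x y z ((2⁻¹ : ℝ) • (z - x)) = (2⁻¹ : ℝ) • (z - x) :=
    Submodule.starProjection_eq_self_iff.mpr hmem
  have hmid : midpoint ℝ y z -ᵥ midpoint ℝ x y = (2⁻¹ : ℝ) • (z - x) := by
    simp only [midpoint_eq_smul_add, vsub_eq_sub, invOf_eq_inv]
    module
  rw [tangGrad, ContinuousLinearMap.comp_apply, hP, ← hmid, LinearMap.coe_toContinuousLinearMap',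
    AffineMap.linearMap_vsub, vsub_eq_sub, add_sub_cancel]

lemma norm_y_sub_x_le_diam3 (x y z : E3) : ‖y - x‖ ≤ diam3 x y z := le_max_left _ _

lemma norm_z_sub_x_le_diam3 (x y z : E3) : ‖z - x‖ ≤ diam3 x y z :=
  (le_max_left _ _).trans (le_max_right _ _)

lemma norm_z_sub_y_le_diam3 (x y z : E3) : ‖z - y‖ ≤ diam3 x y z :=
  (le_max_right _ _).trans (le_max_right _ _)

lemma diam3_pos_of_not_collinear {x y z : E3} (h : ¬ Collinear ℝ ({x, y, z} : Set E3)) :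
    0 < diam3 x y z := by
  contrapose! h
  have hy : y = x := sub_eq_zero.mp (norm_le_zero_iff.mp ((norm_y_sub_x_le_diam3 x y z).trans h))
  have hz : z = x := sub_eq_zero.mp (norm_le_zero_iff.mp ((norm_z_sub_x_le_diam3 x y z).trans h))
  subst hy hz
  simp [collinear_singleton]

lemma cross3_ne_zero_of_regular {Cstar : ℝ} (hCstar : 0 < Cstar) {x y z : E3}
    (hd : 0 < diam3 x y z) (hreg : Cstar * diam3 x y z ^ 2 ≤ area3 x y z) :
    cross3 (y - x) (z - x) ≠ 0 := by
  have harea : 0 < area3 x y z := (by positivity : 0 < Cstar * diam3 x y z ^ 2).trans_le hreg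
  rw [area3] at harea
  exact norm_pos_iff.mp (by linarith)

lemma abs_inner_midpoint_le (N : E3 →ᵃ[ℝ] E3) (x y z : E3)
    (h1 : ⟪N (midpoint ℝ x y), y - x⟫ = 0) (h2 : ⟪N (midpoint ℝ y z), z - y⟫ = 0) :
    |⟪N (midpoint ℝ x y), z - x⟫| ≤ ‖tangGrad N x y z‖ * diam3 x y z ^ 2 / 2 := by
  set D := tangGrad N x y z
  have hsplit : ⟪N (midpoint ℝ x y), z - x⟫ =
      ⟪N (midpoint ℝ x y), z - y⟫ + ⟪N (midpoint ℝ x y), y - x⟫ := by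
    rw [← inner_add_right, sub_add_sub_cancel]
  rw [apply_midpoint_eq_add_tangGrad N x y z, inner_add_left] at h2
  have hzx : ⟪N (midpoint ℝ x y), z - x⟫ = -⟪D ((2⁻¹ : ℝ) • (z - x)), z - y⟫ := by linarith
  have hhalf : ‖(2⁻¹ : ℝ) • (z - x)‖ ≤ 2⁻¹ * diam3 x y z := by
    rw [norm_smul, Real.norm_of_nonneg (by norm_num)]
    gcongr
    exact norm_z_sub_x_le_diam3 x y z
  have hd : 0 ≤ diam3 x y z := (norm_nonneg _).trans (norm_z_sub_y_le_diam3 x y z)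
  rw [hzx, abs_neg]
  calc |⟪D ((2⁻¹ : ℝ) • (z - x)), z - y⟫| ≤ ‖D ((2⁻¹ : ℝ) • (z - x))‖ * ‖z - y‖ :=
        abs_real_inner_le_norm _ _
    _ ≤ ‖D‖ * (2⁻¹ * diam3 x y z) * diam3 x y z := by
        refine mul_le_mul ((D.le_opNorm _).trans (by gcongr)) (norm_z_sub_y_le_diam3 x y z)
          (norm_nonneg _) (mul_nonneg (norm_nonneg _) (by positivity))
    _ = ‖D‖ * diam3 x y z ^ 2 / 2 := by ring

lemma norm_sub_inner_unitNormal_smul_le {Cstar : ℝ} (hCstar : 0 < Cstar) (N : E3 →ᵃ[ℝ] E3)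
    {x y z : E3} (hd : 0 < diam3 x y z) (hreg : Cstar * diam3 x y z ^ 2 ≤ area3 x y z)
    (h1 : ⟪N (midpoint ℝ x y), y - x⟫ = 0) (h2 : ⟪N (midpoint ℝ y z), z - y⟫ = 0) :
    ‖N (midpoint ℝ x y) - ⟪N (midpoint ℝ x y), unitNormal x y z⟫ • unitNormal x y z‖ ≤
      diam3 x y z * ‖tangGrad N x y z‖ / (4 * Cstar) := by
  set T := ‖N (midpoint ℝ x y) - ⟪N (midpoint ℝ x y), unitNormal x y z⟫ • unitNormal x y z‖
  have hmul : T * ‖cross3 (y - x) (z - x)‖ = |⟪N (midpoint ℝ x y), z - x⟫| * ‖y - x‖ :=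
    norm_sub_inner_unitNormal_smul_mul (cross3_ne_zero_of_regular hCstar hd hreg) h1
  have hinner := abs_inner_midpoint_le N x y z h1 h2
  have hyx := norm_y_sub_x_le_diam3 x y z
  have hcross : 2 * Cstar * diam3 x y z ^ 2 ≤ ‖cross3 (y - x) (z - x)‖ := by
    rw [area3] at hreg
    linarith
  have hT : 0 ≤ T := norm_nonneg _
  have key : diam3 x y z ^ 2 * (T * (4 * Cstar)) ≤
      diam3 x y z ^ 2 * (diam3 x y z * ‖tangGrad N x y z‖) := by
    nlinarith [mul_le_mul hinner hyx (norm_nonneg _) (by positivity),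
      mul_le_mul_of_nonneg_left hcross hT]
  rw [le_div_iff₀ (by positivity)]
  exact le_of_mul_le_mul_left key (by positivity)

/-- the comparison lemma for pseudo-unit edge directors on the
shared edge `[x,y]` of two adjacent regular triangles `conv{x,y,z}` and
`conv{x,y,w}`. -/
theorem stmt_5 (Cstar : ℝ) (hCstar : 0 < Cstar) :
    ∃ C > (0 : ℝ), ∃ c > (0 : ℝ),
      ∀ (x y z w : E3) (ν' : E3) (N N' : E3 →ᵃ[ℝ] E3),
      ¬ Collinear ℝ ({x, y, z} : Set E3) →
      ¬ Collinear ℝ ({x, y, w} : Set E3) →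
      Cstar * diam3 x y z ^ 2 ≤ area3 x y z →
      Cstar * diam3 x y w ^ 2 ≤ area3 x y w →
      (ν' = unitNormal x y w ∨ ν' = -unitNormal x y w) →
      unitNormal x y z + ν' ≠ 0 →
      ⟪N (midpoint ℝ x y), y - x⟫ = 0 →
      ⟪N (midpoint ℝ y z), z - y⟫ = 0 →
      ⟪N' (midpoint ℝ x y), y - x⟫ = 0 →
      ⟪N' (midpoint ℝ y w), w - y⟫ = 0 →
      N (midpoint ℝ x y) = N' (midpoint ℝ x y) →
      ⟪N (midpoint ℝ x y),
        ‖unitNormal x y z + ν'‖⁻¹ • (unitNormal x y z + ν')⟫ = 1 →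
      max (diam3 x y z) (diam3 x y w) *
          (‖tangGrad N x y z‖ + ‖tangGrad N' x y w‖) ≤ c →
      ‖N (midpoint ℝ x y) - unitNormal x y z‖ ≤
        C * max (diam3 x y z) (diam3 x y w) *
          (‖tangGrad N x y z‖ + ‖tangGrad N' x y w‖) := by
  refine ⟨1 / (2 * Cstar), by positivity, 2 * Cstar, by positivity, ?_⟩
  intro x y z w ν' N N' hxyz hxyw hreg hreg' hν' hne h1 h2 h1' h2' hNN' hn hsmall
  have hd := diam3_pos_of_not_collinear hxyz
  have hd' := diam3_pos_of_not_collinear hxyw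
  have hν_norm : ‖unitNormal x y z‖ = 1 :=
    norm_unitNormal (cross3_ne_zero_of_regular hCstar hd hreg)
  have hν'_norm : ‖ν'‖ = 1 := by
    rcases hν' with rfl | rfl <;>
      simp [norm_unitNormal (cross3_ne_zero_of_regular hCstar hd' hreg')]
  have ht := norm_sub_inner_unitNormal_smul_le hCstar N hd hreg h1 h2
  have ht' : ‖N (midpoint ℝ x y) - ⟪N (midpoint ℝ x y), ν'⟫ • ν'‖ ≤
      diam3 x y w * ‖tangGrad N' x y w‖ / (4 * Cstar) := by
    have h := norm_sub_inner_unitNormal_smul_le hCstar N' hd' hreg' h1' h2'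
    rw [hNN']
    rcases hν' with rfl | rfl
    · exact h
    · simpa only [inner_neg_right, neg_smul, smul_neg, neg_neg] using h
  set d := max (diam3 x y z) (diam3 x y w)
  calc _ ≤ 2 * (d * ‖tangGrad N x y z‖ / (4 * Cstar) + d * ‖tangGrad N' x y w‖ / (4 * Cstar)) := by
        refine norm_sub_le_of_inner_normalize_add_eq_one hν_norm hν'_norm hne
          (ht.trans ?_) (ht'.trans ?_) hn ?_
        · gcongr; exact le_max_left _ _
        · gcongr; exact le_max_right _ _
        · rw [← add_div, div_le_iff₀ (by positivity)]
          linarith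
    _ = _ := by field_simp; ring
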